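/- arXiv:1708.04784 — 2 statements merged into one kernel-verified Lean document; each statement's English description precedes it below -/
import Mathlib

section
/- Let p be a prime and let R = ℤ_{(p)}[y_1, ..., y_p] and f = p^p + y_1 y_2 ⋯ y_p. Then f ∈ M^p where M = ⟨p, y_1, ..., y_p⟩, and the set of maximal ideals of R at which f has order ≥ p (i.e., f ∈ Q^p for a maximal ideal Q) consists exactly of those maximal ideals containing ⟨p, y_1, ..., y_p⟩. -/
/-!
A derivation maps `Q ^ (n + 1)` into `Q ^ n`. If `f ∈ Q ^ p`, differentiating `f` once in each of
the `p - 1` variables other than `y_i` kills `p ^ p` and leaves `y_i`, so `y_i ∈ Q`. Then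
`p ^ p = f - y_1 ⋯ y_p ∈ Q`, hence `p ∈ Q` since `Q` is prime. Conversely both summands of `f`
lie in `M ^ p`.
-/

open MvPolynomial

theorem Derivation.map_mem_pow_of_mem_pow_succ {R A : Type*} [CommSemiring R] [CommSemiring A]
    [Algebra R A] (D : Derivation R A A) {I : Ideal A} {n : ℕ} {a : A}
    (ha : a ∈ I ^ (n + 1)) : D a ∈ I ^ n := by
  induction n generalizing a with
  | zero => simp
  | succ n ih =>
    rw [pow_succ] at ha
    refine Submodule.mul_induction_on ha (fun b hb c hc => ?_) (fun x y hx hy => ?_)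
    · rw [D.leibniz, smul_eq_mul, smul_eq_mul, pow_succ]
      exact add_mem (Ideal.mul_mem_right _ _ hb) (Ideal.mul_mem_mul_rev (ih hb) hc)
    · rw [D.map_add]
      exact add_mem hx hy

namespace MvPolynomial

variable {σ A : Type*} [CommSemiring A]

theorem pderiv_prod_X_of_notMem {s : Finset σ} {j : σ} (hj : j ∉ s) :
    pderiv j (∏ i ∈ s, X i : MvPolynomial σ A) = 0 := by
  classical
  induction s using Finset.induction_on with
  | empty => simp
  | insert a s ha ih =>
    rw [Finset.mem_insert, not_or] at hj
    rw [Finset.prod_insert ha, pderiv_mul, pderiv_X_of_ne (Ne.symm hj.1), ih hj.2]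
    simp

theorem mem_pow_of_prod_X_mul_mem_pow {Q : Ideal (MvPolynomial σ A)} {s : Finset σ} {n : ℕ}
    {u : MvPolynomial σ A} (hu : ∀ j ∈ s, pderiv j u = 0)
    (h : (∏ i ∈ s, X i) * u ∈ Q ^ (s.card + n)) : u ∈ Q ^ n := by
  classical
  induction s using Finset.induction_on with
  | empty => simpa using h
  | insert a s ha ih =>
    refine ih (fun j hj => hu j (Finset.mem_insert_of_mem hj)) ?_
    have hderiv : pderiv a ((∏ i ∈ insert a s, X i) * u) = (∏ i ∈ s, X i) * u := by
      rw [Finset.prod_insert ha, mul_assoc, pderiv_mul, pderiv_X_self, pderiv_mul,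
        pderiv_prod_X_of_notMem ha, hu a (Finset.mem_insert_self a s)]
      ring
    rw [← hderiv]
    apply (pderiv a).map_mem_pow_of_mem_pow_succ
    rwa [Finset.card_insert_of_notMem ha, add_right_comm] at h

theorem X_mem_of_C_add_prod_X_mem_pow [Fintype σ] (hσ : 1 < Fintype.card σ)
    {Q : Ideal (MvPolynomial σ A)} {c : A} (h : C c + ∏ i, X i ∈ Q ^ Fintype.card σ) (i : σ) :
    X i ∈ Q := by
  classical
  obtain ⟨j, hji⟩ := Fintype.exists_ne_of_one_lt_card hσ i
  set s := (Finset.univ.erase j).erase i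
  have hcard : Fintype.card σ = (s.card + 1) + 1 := by
    rw [Finset.card_erase_of_mem (by simpa using hji.symm), Finset.card_erase_of_mem
      (Finset.mem_univ _), Finset.card_univ]
    omega
  have hderiv : pderiv j (C c + ∏ i, X i) = (∏ k ∈ s, X k) * X i := by
    rw [Finset.prod_erase_mul _ _ (by simpa using hji.symm), map_add, pderiv_C, zero_add,
      ← Finset.prod_erase_mul _ _ (Finset.mem_univ j), pderiv_mul, pderiv_X_self,
      pderiv_prod_X_of_notMem (Finset.notMem_erase j _)]
    ring
  rw [← pow_one Q]
  refine mem_pow_of_prod_X_mul_mem_pow (s := s) (fun k hk => pderiv_X_of_ne ?_) ?_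
  · exact (Finset.ne_of_mem_erase hk).symm
  · rw [hcard] at h
    rw [← hderiv]
    exact (pderiv j).map_mem_pow_of_mem_pow_succ h

end MvPolynomial

/-- Let `p` be prime, `R = ℤ_{(p)}[y_1,…,y_p]` and `f = p^p + y_1 ⋯ y_p`.  Then
`f ∈ M^p` for `M = ⟨p, y_1,…,y_p⟩`, and a maximal ideal `Q` of `R` satisfies `f ∈ Q^p`
exactly when `Q` contains `⟨p, y_1,…,y_p⟩`. -/
theorem order_p_locus_of_arithmetic_example (p : ℕ) (hp : p.Prime)
    [inst : (Ideal.span {(p : ℤ)}).IsPrime] :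
    letI Zp := Localization.AtPrime (Ideal.span {(p : ℤ)})
    letI R := MvPolynomial (Fin p) Zp
    letI f : R := C ((p : Zp) ^ p) + ∏ i : Fin p, X i
    letI M : Ideal R := Ideal.span (insert (C (p : Zp)) (Set.range X))
    f ∈ M ^ p ∧ ∀ Q : Ideal R, Q.IsMaximal → (f ∈ Q ^ p ↔ M ≤ Q) := by
  set Zp := Localization.AtPrime (Ideal.span {(p : ℤ)})
  set R := MvPolynomial (Fin p) Zp
  set f : R := C ((p : Zp) ^ p) + ∏ i : Fin p, X i
  set M : Ideal R := Ideal.span (insert (C (p : Zp)) (Set.range X))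
  have hpM : (C (p : Zp) : R) ∈ M := Ideal.subset_span (Set.mem_insert _ _)
  have hXM (i : Fin p) : (X i : R) ∈ M := Ideal.subset_span (Set.mem_insert_of_mem _ ⟨i, rfl⟩)
  have hfM : f ∈ M ^ p := by
    refine add_mem ?_ ?_
    · rw [map_pow]
      exact Ideal.pow_mem_pow hpM p
    · simpa using Ideal.prod_mem_prod (s := Finset.univ) (I := fun _ => M) fun i _ => hXM i
  refine ⟨hfM, fun Q hQ => ⟨fun hfQ => ?_, fun hMQ => Ideal.pow_right_mono hMQ p hfM⟩⟩
  have hXQ : ∀ i, (X i : R) ∈ Q :=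
    X_mem_of_C_add_prod_X_mem_pow (by simpa using hp.one_lt) (by simpa using hfQ)
  have hpQ : (C (p : Zp) : R) ∈ Q := by
    refine hQ.isPrime.mem_of_pow_mem p ?_
    rw [← map_pow, ← add_sub_cancel_right (C _) (∏ i : Fin p, (X i : R))]
    exact sub_mem (Ideal.pow_le_self hp.ne_zero hfQ)
      (Ideal.prod_mem _ (Finset.mem_univ ⟨0, hp.pos⟩) (hXQ _))
  rw [Ideal.span_le]
  rintro x (rfl | ⟨i, rfl⟩)
  exacts [hpQ, hXQ i]
end

section
/- Let k be a field of characteristic p > 0, and let f = f_0^p + z_1 f_1^p + ... + z_m f_m^p ∈ k[z_1,...,z_m, u_1,...,u_e] where f_0, ..., f_m ∈ k[z, u] have zero constant term. Then the singular locus of the hypersurface V(f) (the vanishing locus of f and all its partial derivatives) equals V(f_0, f_1, ..., f_m) as closed subsets of affine space over the algebraic closure of k. -/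
open MvPolynomial

lemma pderiv_pow_char_aux {k : Type*} [Field k] (p : ℕ) [Fact p.Prime] [CharP k p]
    {σ : Type*} (v : σ) (g : MvPolynomial σ k) : pderiv v (g ^ p) = 0 := by
  rw [pderiv_pow, CharP.cast_eq_zero (MvPolynomial σ k) p, zero_mul, zero_mul]

/-- Let `k` be a field of characteristic `p > 0` and
`f = f_0^p + z_1 f_1^p + ⋯ + z_m f_m^p ∈ k[z_1,…,z_m,u_1,…,u_e]` where the `f_j` have zero
constant term.  Then the singular locus of the hypersurface `V(f)` (points of the affine
space over the algebraic closure of `k` where `f` and all its partial derivatives vanish)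
equals `V(f_0, f_1, …, f_m)`. -/
theorem singular_locus_of_p_power_hypersurface
    {k : Type*} [Field k] (p : ℕ) [Fact p.Prime] [CharP k p] (m e : ℕ)
    (fs : Fin (m + 1) → MvPolynomial (Fin m ⊕ Fin e) k)
    (hconst : ∀ j, constantCoeff (fs j) = 0)
    (f : MvPolynomial (Fin m ⊕ Fin e) k)
    (hf : f = fs 0 ^ p + ∑ j : Fin m, X (Sum.inl j) * fs j.succ ^ p) :
    {a : Fin m ⊕ Fin e → AlgebraicClosure k |
        aeval a f = 0 ∧ ∀ v : Fin m ⊕ Fin e, aeval a (pderiv v f) = 0} =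
      {a : Fin m ⊕ Fin e → AlgebraicClosure k | ∀ j, aeval a (fs j) = 0} := by
  have hp : 0 < p := (Fact.out : p.Prime).pos
  have hderiv : ∀ i : Fin m, pderiv (Sum.inl i) f = fs i.succ ^ p := by
    intro i
    rw [hf, map_add, pderiv_pow_char_aux p, zero_add, map_sum]
    rw [Finset.sum_eq_single i]
    · rw [pderiv_mul, pderiv_pow_char_aux p, mul_zero, add_zero, pderiv_X,
        Pi.single_eq_same, one_mul]
    · intro j _ hji
      rw [pderiv_mul, pderiv_pow_char_aux p, mul_zero, add_zero, pderiv_X,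
        Pi.single_eq_of_ne (by simpa using hji), zero_mul]
    · simp
  ext a
  simp only [Set.mem_setOf_eq]
  constructor
  · rintro ⟨h0, hv⟩
    have hsucc : ∀ i : Fin m, aeval a (fs i.succ) = 0 := by
      intro i
      have := hv (Sum.inl i)
      rw [hderiv i, map_pow] at this
      exact pow_eq_zero_iff hp.ne' |>.mp this
    have h0' : aeval a (fs 0) = 0 := by
      rw [hf] at h0
      simp only [map_add, map_pow, map_sum, map_mul] at h0
      have : ∀ j : Fin m, aeval a (X (Sum.inl j) : MvPolynomial (Fin m ⊕ Fin e) k) *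
          aeval a (fs j.succ) ^ p = 0 := by
        intro j; rw [hsucc j, zero_pow hp.ne', mul_zero]
      rw [Finset.sum_congr rfl (fun j _ => this j), Finset.sum_const_zero, add_zero] at h0
      exact pow_eq_zero_iff hp.ne' |>.mp h0
    intro j
    rcases Fin.eq_zero_or_eq_succ j with rfl | ⟨i, rfl⟩
    · exact h0'
    · exact hsucc i
  · intro h
    have hall : ∀ j, aeval a (fs j) = 0 := h
    constructor
    · rw [hf]
      simp [hall, zero_pow hp.ne']
    · intro v
      cases v with
      | inl i => rw [hderiv i, map_pow, hall, zero_pow hp.ne']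
      | inr i =>
        rw [hf, map_add, map_add, pderiv_pow_char_aux p, map_zero, zero_add, map_sum, map_sum]
        refine Finset.sum_eq_zero fun j _ => ?_
        rw [pderiv_mul, pderiv_pow_char_aux p, mul_zero, add_zero, pderiv_X,
          Pi.single_eq_of_ne (by simp), zero_mul, map_zero]
end
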